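/- Let I = (G, 𝐓, W, k) be a tuple where G = (V,E) is a finite simple undirected graph, 𝐓 is a finite set of pairs of vertices, W ⊆ V with no two distinct vertices of W adjacent in G (so that the sets FC_W(G,w) and regions P_W(G,R) are well-defined), and assume P_W(G,∅) = ∅. For a vertex set S, let B(S) = N(V ∖ S) denote its inner boundary (the vertices of S with a neighbor outside S). Then the sets B(P_W(G,{w})) ∖ W for distinct w ∈ W are pairwise disjoint, so the map f : ⋃_{w ∈ W} B(P_W(G,{w})) ∖ W → W sending v to the unique w with v ∈ B(P_W(G,{w})) is well-defined; and the instance contract(I, f) = (G_f, 𝐓_f, W, k) is bipedal, i.e., every connected component C of G_f − W satisfies |N_{G_f}(C)| ≤ 2. -/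

import Mathlib

open scoped Classical

variable {V : Type*} [Fintype V] [DecidableEq V]

/-- The graph `G − X`: the graph obtained from `G` by deleting the vertices of `X`
(encoded on the same vertex type: vertices of `X` become isolated). -/
def removeVerts (G : SimpleGraph V) (X : Set V) : SimpleGraph V where
  Adj u v := G.Adj u v ∧ u ∉ X ∧ v ∉ X
  symm := by constructor; rintro u v ⟨h, hu, hv⟩; exact ⟨h.symm, hv, hu⟩
  loopless := by constructor; rintro v ⟨h, -, -⟩; exact G.loopless.irrefl v h

/-- The open neighborhood `N(C)` of a vertex set `C`. -/
def nbhd (G : SimpleGraph V) (C : Set V) : Set V :=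
  {v | v ∉ C ∧ ∃ u ∈ C, G.Adj u v}

/-- The set of vertices connected to `S` in `G − X`. -/
def reachSet (G : SimpleGraph V) (X S : Set V) : Set V :=
  {v | ∃ s ∈ S, (removeVerts G X).Reachable s v}

/-- `X` is an `S`–`T` separator: `X ⊆ V ∖ (S ∪ T)` and no path of `G − X` connects `S` to `T`. -/
def IsSeparator (G : SimpleGraph V) (S T X : Set V) : Prop :=
  Disjoint X (S ∪ T) ∧ ∀ s ∈ S, ∀ t ∈ T, ¬ (removeVerts G X).Reachable s t

/-- A minimal `S`–`T` separator. -/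
def IsMinimalSep (G : SimpleGraph V) (S T X : Set V) : Prop :=
  IsSeparator G S T X ∧ ∀ X' ⊂ X, ¬ IsSeparator G S T X'

/-- A minimum `S`–`T` separator. -/
def IsMinimumSep (G : SimpleGraph V) (S T X : Set V) : Prop :=
  IsSeparator G S T X ∧ ∀ X', IsSeparator G S T X' → X.ncard ≤ X'.ncard

/-- A separator `X` is farthest (w.r.t. `S`) if every `S`–`T` separator whose reachable set
strictly contains that of `X` is strictly larger. -/
def IsFarthest (G : SimpleGraph V) (S T X : Set V) : Prop :=
  ∀ X', IsSeparator G S T X' → reachSet G X S ⊂ reachSet G X' S → X.ncard < X'.ncard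

/-- An important `S`–`T` separator. -/
def IsImportantSep (G : SimpleGraph V) (S T X : Set V) : Prop :=
  IsMinimalSep G S T X ∧ ∀ X', IsMinimalSep G S T X' →
    reachSet G X S ⊂ reachSet G X' S → X.ncard < X'.ncard

/-- `X` is a vertex multicut of `(G, Pairs)`. -/
def IsMulticut (G : SimpleGraph V) (Pairs : Set (V × V)) (X : Set V) : Prop :=
  ∀ p ∈ Pairs, ¬ (removeVerts G X).Reachable p.1 p.2

/-- A solution of the Vertex Multicut Compression instance `(G, Pairs, W, k)`. -/
def IsSolution (G : SimpleGraph V) (Pairs : Set (V × V)) (W : Set V) (k : ℕ)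
    (X : Set V) : Prop :=
  X.ncard ≤ k ∧ IsMulticut G Pairs X ∧ Disjoint X W ∧
    ∀ w₁ ∈ W, ∀ w₂ ∈ W, w₁ ≠ w₂ → ¬ (removeVerts G X).Reachable w₁ w₂

/-- The region `P_W(G, R) = ⋂_{w ∈ R} FC(w) ∖ ⋃_{w' ∈ W ∖ R} FC(w')`
(for `R = ∅` the intersection is the whole vertex set). -/
def regionP (W : Set V) (FC : V → Set V) (R : Set V) : Set V :=
  (⋂ w ∈ R, FC w) \ (⋃ w ∈ (W \ R), FC w)

/-- `f*`: the extension of `f : Z → W` by the identity on `V ∖ Z`. -/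
noncomputable def fStar (Z : Set V) (f : V → V) (v : V) : V :=
  if v ∈ Z then f v else v

/-- The contracted graph: vertex set `V ∖ Z` (vertices of `Z` become isolated), with
edge set `{(f*(u), f*(v)) : (u,v) ∈ E, f*(u) ≠ f*(v)}`. -/
def contractGraph (G : SimpleGraph V) (Z : Set V) (f : V → V) : SimpleGraph V where
  Adj a b := a ≠ b ∧ ∃ u v, G.Adj u v ∧ a = fStar Z f u ∧ b = fStar Z f v
  symm := by
    constructor; rintro a b ⟨hne, u, v, h, ha, hb⟩
    exact ⟨hne.symm, v, u, h.symm, hb, ha⟩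
  loopless := by constructor; rintro a ⟨hne, -⟩; exact hne rfl

/-- The terminal pairs of the contracted instance. -/
def contractPairs (Z : Set V) (f : V → V) (Pairs : Set (V × V)) : Set (V × V) :=
  {q | ∃ p ∈ Pairs, q = (fStar Z f p.1, fStar Z f p.2)}

/-- The inner boundary `B(S) = N(V ∖ S)`: the vertices of `S` with a neighbor outside `S`. -/
def innerBnd (G : SimpleGraph V) (S : Set V) : Set V :=
  nbhd G Sᶜ

set_option linter.unusedSectionVars false
set_option linter.unusedVariables false

section Basics

variable {G : SimpleGraph V} {X : Set V} {w : V}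

lemma removeVerts_adj {u v : V} : (removeVerts G X).Adj u v ↔ G.Adj u v ∧ u ∉ X ∧ v ∉ X :=
  Iff.rfl

lemma mem_nbhd {A : Set V} {z : V} : z ∈ nbhd G A ↔ z ∉ A ∧ ∃ u ∈ A, G.Adj u z := Iff.rfl

lemma mem_reachSet {v : V} : v ∈ reachSet G X {w} ↔ (removeVerts G X).Reachable w v := by
  simp [reachSet]

/-- Generic induction along reachability in `G − X`. -/
lemma reach_induction {P : V → Prop} {a : V} (base : P a)
    (step : ∀ u v, G.Adj u v → u ∉ X → v ∉ X → P u → P v) :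
    ∀ v, (removeVerts G X).Reachable a v → P v := by
  intro v h
  rw [SimpleGraph.reachable_iff_reflTransGen] at h
  induction h with
  | refl => exact base
  | tail _ h₂ ih => exact step _ _ h₂.1 h₂.2.1 h₂.2.2 ih

lemma self_mem_reachSet : w ∈ reachSet G X {w} :=
  mem_reachSet.2 (SimpleGraph.Reachable.refl w)

lemma reachSet_not_mem (hw : w ∉ X) {v : V} (hv : v ∈ reachSet G X {w}) : v ∉ X := by
  rw [mem_reachSet] at hv
  exact reach_induction (X := X) (P := fun v => v ∉ X) hw (fun u v _ _ hv _ => hv) v hv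

lemma reachSet_closed (hw : w ∉ X) {v y : V} (hv : v ∈ reachSet G X {w})
    (hadj : G.Adj v y) (hy : y ∉ X) : y ∈ reachSet G X {w} := by
  have hvX := reachSet_not_mem hw hv
  rw [mem_reachSet] at hv ⊢
  exact hv.trans (SimpleGraph.Adj.reachable ⟨hadj, hvX, hy⟩)

end Basics

section Sep

variable {G : SimpleGraph V} {W : Set V} {w : V}

lemma sep_disjoint_W (hw : w ∈ W) {X : Set V} (hX : IsSeparator G {w} (W \ {w}) X) :
    Disjoint X W := by
  have : ({w} : Set V) ∪ (W \ {w}) = W := by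
    rw [Set.union_diff_cancel' (by simp) (by simpa using hw)]
  rw [← this]; exact hX.1

lemma w_not_mem_sep (hw : w ∈ W) {X : Set V} (hX : IsSeparator G {w} (W \ {w}) X) :
    w ∉ X := fun h => (sep_disjoint_W hw hX).ne_of_mem h hw rfl

lemma reachSet_inter_W (hw : w ∈ W) {X : Set V} (hX : IsSeparator G {w} (W \ {w}) X)
    {v : V} (hv : v ∈ reachSet G X {w}) (hvW : v ∈ W) : v = w := by
  by_contra hne
  exact hX.2 w rfl v ⟨hvW, hne⟩ (mem_reachSet.1 hv)

lemma reachSet_disj_sep (hw : w ∈ W) {X : Set V} (hX : IsSeparator G {w} (W \ {w}) X)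
    {v : V} (hv : v ∈ reachSet G X {w}) : v ∉ X :=
  reachSet_not_mem (w_not_mem_sep hw hX) hv

/-- The boundary of a one-terminal enclosure is a separator, hence has size ≥ the minimum. -/
lemma nbhd_isSeparator (hw : w ∈ W) (A : Set V) (hwA : w ∈ A)
    (hA1 : ∀ w' ∈ W, w' ∈ A → w' = w) (hA2 : ∀ z ∈ nbhd G A, z ∉ W) :
    IsSeparator G {w} (W \ {w}) (nbhd G A) := by
  constructor
  · rw [Set.disjoint_union_right]
    constructor
    · exact Set.disjoint_left.2 fun z hz hzw => hA2 z hz (by rw [Set.mem_singleton_iff] at hzw; subst hzw; exact hw)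
    · exact Set.disjoint_left.2 fun z hz hzw => hA2 z hz hzw.1
  · intro s hs t ht hreach
    rw [Set.mem_singleton_iff] at hs
    rw [hs] at hreach
    have hmem : ∀ v, (removeVerts G (nbhd G A)).Reachable w v → v ∈ A := by
      refine reach_induction hwA ?_
      intro u v hadj hu hv huA
      by_contra hvA
      exact hv ⟨hvA, u, huA, hadj⟩
    exact ht.2 (hA1 t ht.1 (hmem t hreach))

end Sep

section Sep2

variable {G : SimpleGraph V} {W : Set V} {w : V} {X : Set V}

/-- Every vertex of a minimum separator has a neighbour in the reach set. -/
lemma sep_min_nbr (hw : w ∈ W) (hmin : IsMinimumSep G {w} (W \ {w}) X)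
    {x : V} (hx : x ∈ X) : ∃ u ∈ reachSet G X {w}, G.Adj u x := by
  by_contra h
  push_neg at h
  have hsep' : IsSeparator G {w} (W \ {w}) (X \ {x}) := by
    constructor
    · exact hmin.1.1.mono_left Set.diff_subset
    · intro s hs t ht hreach
      rw [Set.mem_singleton_iff] at hs
      rw [hs] at hreach
      have hmem : ∀ v, (removeVerts G (X \ {x})).Reachable w v → v ∈ reachSet G X {w} := by
        refine reach_induction self_mem_reachSet ?_
        intro u v hadj hu hv huR
        by_cases hvx : v = x
        · exact absurd hadj (hvx ▸ h u huR)
        · exact reachSet_closed (w_not_mem_sep hw hmin.1) huR hadj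
            (fun hvX => hv ⟨hvX, hvx⟩)
      have := reachSet_inter_W hw hmin.1 (hmem t hreach) ht.1
      exact ht.2 this
  have hle := hmin.2 _ hsep'
  have hlt : (X \ {x}).ncard < X.ncard :=
    Set.ncard_diff_singleton_lt_of_mem hx (Set.toFinite X)
  omega

lemma nbr_of_reachSet_mem_sep (hw : w ∈ W) (hsep : IsSeparator G {w} (W \ {w}) X)
    {u z : V} (hu : u ∈ reachSet G X {w}) (hz : z ∉ reachSet G X {w})
    (hadj : G.Adj u z) : z ∈ X := by
  by_contra hzX
  exact hz (reachSet_closed (w_not_mem_sep hw hsep) hu hadj hzX)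

lemma nbhd_reachSet_eq (hw : w ∈ W) (hmin : IsMinimumSep G {w} (W \ {w}) X) :
    nbhd G (reachSet G X {w}) = X := by
  apply Set.Subset.antisymm
  · rintro z ⟨hz, u, hu, hadj⟩
    exact nbr_of_reachSet_mem_sep hw hmin.1 hu hz hadj
  · intro x hx
    obtain ⟨u, hu, hadj⟩ := sep_min_nbr hw hmin hx
    exact ⟨fun hxR => reachSet_disj_sep hw hmin.1 hxR hx, u, hu, hadj⟩

end Sep2

section Submod

variable {G : SimpleGraph V} {A B : Set V}

lemma nbhd_union_subset' {z : V} (h : z ∈ nbhd G (A ∪ B)) : z ∈ nbhd G A ∪ nbhd G B := by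
  obtain ⟨hz, u, hu, hadj⟩ := h
  rcases hu with hu | hu
  · exact Or.inl ⟨fun h' => hz (Or.inl h'), u, hu, hadj⟩
  · exact Or.inr ⟨fun h' => hz (Or.inr h'), u, hu, hadj⟩

lemma nbhd_inter_subset' {z : V} (h : z ∈ nbhd G (A ∩ B)) : z ∈ nbhd G A ∪ nbhd G B := by
  obtain ⟨hz, u, hu, hadj⟩ := h
  by_cases hzA : z ∈ A
  · exact Or.inr ⟨fun h' => hz ⟨hzA, h'⟩, u, hu.2, hadj⟩
  · exact Or.inl ⟨hzA, u, hu.1, hadj⟩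

lemma ncard_nbhd_submod :
    (nbhd G (A ∪ B)).ncard + (nbhd G (A ∩ B)).ncard ≤ (nbhd G A).ncard + (nbhd G B).ncard := by
  have key : (nbhd G (A ∪ B)) ∪ (nbhd G (A ∩ B)) ⊆ nbhd G A ∪ nbhd G B :=
    fun z hz => hz.elim nbhd_union_subset' nbhd_inter_subset'
  have key2 : (nbhd G (A ∪ B)) ∩ (nbhd G (A ∩ B)) ⊆ nbhd G A ∩ nbhd G B := by
    rintro z ⟨⟨hz1, -⟩, hz2⟩
    obtain ⟨hz2', u, hu, hadj⟩ := hz2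
    exact ⟨⟨fun h' => hz1 (Or.inl h'), u, hu.1, hadj⟩, fun h' => hz1 (Or.inr h'), u, hu.2, hadj⟩
  calc (nbhd G (A ∪ B)).ncard + (nbhd G (A ∩ B)).ncard
      = ((nbhd G (A ∪ B)) ∪ (nbhd G (A ∩ B))).ncard + ((nbhd G (A ∪ B)) ∩ (nbhd G (A ∩ B))).ncard := by
        rw [Set.ncard_union_add_ncard_inter]
    _ ≤ (nbhd G A ∪ nbhd G B).ncard + (nbhd G A ∩ nbhd G B).ncard := by
        exact Nat.add_le_add (Set.ncard_le_ncard key (Set.toFinite _))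
          (Set.ncard_le_ncard key2 (Set.toFinite _))
    _ = (nbhd G A).ncard + (nbhd G B).ncard := by rw [Set.ncard_union_add_ncard_inter]

end Submod

section Pairs

variable (G : SimpleGraph V) (sep : V → Set V)

def Rset (w : V) : Set V := reachSet G (sep w) {w}

def Qset (w : V) : Set V := (Rset G sep w ∪ sep w)ᶜ

variable {G sep}
variable {W : Set V}

variable (hsep : ∀ w ∈ W, IsMinimumSep G {w} (W \ {w}) (sep w))

lemma mem_Qset_iff {w v : V} : v ∈ Qset G sep w ↔ v ∉ Rset G sep w ∧ v ∉ sep w := by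
  simp [Qset, Rset, not_or]
include hsep

lemma nbhd_Qset_subset {w : V} (hw : w ∈ W) : nbhd G (Qset G sep w) ⊆ sep w := by
  rintro z ⟨hz, u, hu, hadj⟩
  rw [Qset, Set.mem_compl_iff, not_not] at hz
  rcases hz with hz | hz
  · exact absurd (reachSet_closed (w_not_mem_sep hw (hsep w hw).1) hz hadj.symm
      (fun h => hu (Or.inr h))) (fun h => hu (Or.inl h))
  · exact hz

lemma terminal_mem_Qset {a b : V} (ha : a ∈ W) (hb : b ∈ W) (hab : a ≠ b) :
    a ∈ Qset G sep b := by
  rw [mem_Qset_iff]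
  exact ⟨fun h => hab (reachSet_inter_W hb (hsep b hb).1 h ha),
    fun h => (sep_disjoint_W hb (hsep b hb).1).ne_of_mem h ha rfl⟩

/-- The uncrossed set `R_a ∩ Q_b`. -/
def Aset (G : SimpleGraph V) (sep : V → Set V) (a b : V) : Set V :=
  Rset G sep a ∩ Qset G sep b

lemma terminal_mem_Aset {a b : V} (ha : a ∈ W) (hb : b ∈ W) (hab : a ≠ b) :
    a ∈ Aset G sep a b :=
  ⟨self_mem_reachSet, terminal_mem_Qset hsep ha hb hab⟩

lemma Aset_inter_W {a b : V} (ha : a ∈ W) {w' : V} (hw' : w' ∈ W)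
    (h : w' ∈ Aset G sep a b) : w' = a :=
  reachSet_inter_W ha (hsep a ha).1 h.1 hw'

lemma nbhd_Aset_subset {a b : V} (ha : a ∈ W) (hb : b ∈ W) :
    nbhd G (Aset G sep a b) ⊆ sep a ∪ sep b := by
  rintro z ⟨hz, u, hu, hadj⟩
  by_cases hza : z ∈ sep a
  · exact Or.inl hza
  by_cases hzb : z ∈ sep b
  · exact Or.inr hzb
  exfalso
  have hzR : z ∈ Rset G sep a :=
    reachSet_closed (w_not_mem_sep ha (hsep a ha).1) hu.1 hadj hza
  have hzQ : z ∈ Qset G sep b := by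
    rw [mem_Qset_iff]
    refine ⟨fun hzRb => ?_, hzb⟩
    have : u ∈ sep b := nbr_of_reachSet_mem_sep hb (hsep b hb).1 hzRb
      (fun h => (mem_Qset_iff.1 hu.2).1 h) hadj.symm
    exact (mem_Qset_iff.1 hu.2).2 this
  exact hz ⟨hzR, hzQ⟩

lemma nbhd_Aset_disj_W {a b : V} (ha : a ∈ W) (hb : b ∈ W) {z : V}
    (hz : z ∈ nbhd G (Aset G sep a b)) : z ∉ W := by
  intro hzW
  rcases nbhd_Aset_subset hsep ha hb hz with h | h
  · exact (sep_disjoint_W ha (hsep a ha).1).ne_of_mem h hzW rfl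
  · exact (sep_disjoint_W hb (hsep b hb).1).ne_of_mem h hzW rfl

lemma nbhd_Aset_lower {a b : V} (ha : a ∈ W) (hb : b ∈ W) (hab : a ≠ b) :
    (sep a).ncard ≤ (nbhd G (Aset G sep a b)).ncard := by
  refine (hsep a ha).2 _ (nbhd_isSeparator ha _ (terminal_mem_Aset hsep ha hb hab)
    (fun w' hw' h => Aset_inter_W hsep ha hw' h) ?_)
  exact fun z hz => nbhd_Aset_disj_W hsep ha hb hz

lemma nbhd_Aset_inter {a b : V} (ha : a ∈ W) (hb : b ∈ W) :
    nbhd G (Aset G sep a b) ∩ nbhd G (Aset G sep b a) ⊆ sep a ∩ sep b := by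
  rintro z ⟨hz1, hz2⟩
  constructor
  · by_contra hza
    obtain ⟨hz1', u, hu, hadj⟩ := hz1
    have hzRa : z ∈ Rset G sep a :=
      reachSet_closed (w_not_mem_sep ha (hsep a ha).1) hu.1 hadj hza
    obtain ⟨hz2', u', hu', hadj'⟩ := hz2
    have : u' ∈ sep a := nbr_of_reachSet_mem_sep ha (hsep a ha).1 hzRa
      (fun h => (mem_Qset_iff.1 hu'.2).1 h) hadj'.symm
    exact (mem_Qset_iff.1 hu'.2).2 this
  · by_contra hzb
    obtain ⟨hz2', u', hu', hadj'⟩ := hz2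
    have hzRb : z ∈ Rset G sep b :=
      reachSet_closed (w_not_mem_sep hb (hsep b hb).1) hu'.1 hadj' hzb
    obtain ⟨hz1', u, hu, hadj⟩ := hz1
    have : u ∈ sep b := nbr_of_reachSet_mem_sep hb (hsep b hb).1 hzRb
      (fun h => (mem_Qset_iff.1 hu.2).1 h) hadj.symm
    exact (mem_Qset_iff.1 hu.2).2 this

lemma nbhd_Aset_tight {a b : V} (ha : a ∈ W) (hb : b ∈ W) (hab : a ≠ b) :
    (nbhd G (Aset G sep a b)).ncard = (sep a).ncard := by
  have hla := nbhd_Aset_lower hsep ha hb hab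
  have hlb := nbhd_Aset_lower hsep hb ha hab.symm
  have hsum : (nbhd G (Aset G sep a b)).ncard + (nbhd G (Aset G sep b a)).ncard ≤
      (sep a).ncard + (sep b).ncard := by
    have h1 : nbhd G (Aset G sep a b) ∪ nbhd G (Aset G sep b a) ⊆ sep a ∪ sep b := by
      intro z hz
      rcases hz with hz | hz
      · exact nbhd_Aset_subset hsep ha hb hz
      · exact (nbhd_Aset_subset hsep hb ha hz).symm.imp id id |>.symm |>.elim Or.inr Or.inl
    have h2 := nbhd_Aset_inter hsep ha hb
    calc (nbhd G (Aset G sep a b)).ncard + (nbhd G (Aset G sep b a)).ncard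
        = (nbhd G (Aset G sep a b) ∪ nbhd G (Aset G sep b a)).ncard
          + (nbhd G (Aset G sep a b) ∩ nbhd G (Aset G sep b a)).ncard := by
          rw [Set.ncard_union_add_ncard_inter]
      _ ≤ (sep a ∪ sep b).ncard + (sep a ∩ sep b).ncard :=
          Nat.add_le_add (Set.ncard_le_ncard h1 (Set.toFinite _))
            (Set.ncard_le_ncard h2 (Set.toFinite _))
      _ = (sep a).ncard + (sep b).ncard := by rw [Set.ncard_union_add_ncard_inter]
  omega

end Pairs

section USets

variable {G : SimpleGraph V} {sep : V → Set V} {W : Set V}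

/-- `R_w` intersected with the far sides `Q_j` of the other separators, `j ∈ S`. -/
def Tset (G : SimpleGraph V) (sep : V → Set V) (w : V) (S : Set V) : Set V :=
  Rset G sep w ∩ ⋂ j ∈ S, Qset G sep j

def Uset (G : SimpleGraph V) (sep : V → Set V) (W : Set V) (w : V) : Set V :=
  Tset G sep w (W \ {w})

variable (hsep : ∀ w ∈ W, IsMinimumSep G {w} (W \ {w}) (sep w))

include hsep

lemma terminal_mem_Tset {w : V} (hw : w ∈ W) {S : Set V} (hS : S ⊆ W \ {w}) :
    w ∈ Tset G sep w S := by
  refine ⟨self_mem_reachSet, ?_⟩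
  rw [Set.mem_iInter₂]
  intro j hj
  exact terminal_mem_Qset hsep hw (hS hj).1 (fun h => (hS hj).2 (h ▸ rfl))

lemma Tset_inter_W {w : V} (hw : w ∈ W) {S : Set V} {w' : V} (hw' : w' ∈ W)
    (h : w' ∈ Tset G sep w S) : w' = w :=
  reachSet_inter_W hw (hsep w hw).1 h.1 hw'

lemma nbhd_Tset_subset {w : V} (hw : w ∈ W) {S : Set V} (hS : S ⊆ W \ {w}) :
    nbhd G (Tset G sep w S) ⊆ sep w ∪ ⋃ j ∈ S, sep j := by
  rintro z ⟨hz, u, hu, hadj⟩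
  by_cases hzw : z ∈ sep w
  · exact Or.inl hzw
  by_cases hzS : ∃ j ∈ S, z ∈ sep j
  · obtain ⟨j, hj, hzj⟩ := hzS
    exact Or.inr (Set.mem_biUnion hj hzj)
  push_neg at hzS
  exfalso
  apply hz
  constructor
  · exact reachSet_closed (w_not_mem_sep hw (hsep w hw).1) hu.1 hadj hzw
  · rw [Set.mem_iInter₂]
    intro j hj
    rw [mem_Qset_iff]
    refine ⟨fun hzR => ?_, hzS j hj⟩
    have huQ : u ∈ Qset G sep j := by
      have := hu.2; rw [Set.mem_iInter₂] at this; exact this j hj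
    have : u ∈ sep j := nbr_of_reachSet_mem_sep (hS hj).1 (hsep j (hS hj).1).1 hzR
      (fun h => (mem_Qset_iff.1 huQ).1 h) hadj.symm
    exact (mem_Qset_iff.1 huQ).2 this

lemma nbhd_Tset_disj_W {w : V} (hw : w ∈ W) {S : Set V} (hS : S ⊆ W \ {w}) {z : V}
    (hz : z ∈ nbhd G (Tset G sep w S)) : z ∉ W := by
  intro hzW
  rcases nbhd_Tset_subset hsep hw hS hz with h | h
  · exact (sep_disjoint_W hw (hsep w hw).1).ne_of_mem h hzW rfl
  · obtain ⟨j, hj, hzj⟩ := Set.mem_iUnion₂.1 h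
    exact (sep_disjoint_W (hS hj).1 (hsep j (hS hj).1).1).ne_of_mem hzj hzW rfl

lemma nbhd_Tset_lower {w : V} (hw : w ∈ W) {S : Set V} (hS : S ⊆ W \ {w}) :
    (sep w).ncard ≤ (nbhd G (Tset G sep w S)).ncard :=
  (hsep w hw).2 _ (nbhd_isSeparator hw _ (terminal_mem_Tset hsep hw hS)
    (fun w' hw' h => Tset_inter_W hsep hw hw' h) (fun z hz => nbhd_Tset_disj_W hsep hw hS hz))

lemma nbhd_Tset_tight {w : V} (hw : w ∈ W) :
    ∀ S : Set V, S.Finite → S ⊆ W \ {w} →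
      (nbhd G (Tset G sep w S)).ncard = (sep w).ncard := by
  intro S hSfin
  refine Set.Finite.induction_on (motive := fun S _ => S ⊆ W \ {w} →
      (nbhd G (Tset G sep w S)).ncard = (sep w).ncard) S hSfin ?_ ?_
  · intro _
    have h0 : Tset G sep w ∅ = Rset G sep w := by
      simp [Tset]
    rw [h0, Rset, nbhd_reachSet_eq hw (hsep w hw)]
  · intro a S ha hSfin ih hsub
    have haW : a ∈ W \ {w} := hsub (Set.mem_insert a S)
    have hS : S ⊆ W \ {w} := fun x hx => hsub (Set.mem_insert_of_mem a hx)
    have hAB : Tset G sep w S ∩ Aset G sep w a = Tset G sep w (insert a S) := by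
      simp only [Tset, Aset, Set.biInter_insert]
      ext x
      simp only [Set.mem_inter_iff, Set.mem_iInter]
      tauto
    have hunion_lower : (sep w).ncard ≤ (nbhd G (Tset G sep w S ∪ Aset G sep w a)).ncard := by
      refine (hsep w hw).2 _ (nbhd_isSeparator hw _
        (Or.inl (terminal_mem_Tset hsep hw hS)) ?_ ?_)
      · rintro w' hw' (h | h)
        · exact Tset_inter_W hsep hw hw' h
        · exact Aset_inter_W hsep hw hw' h
      · intro z hz
        rcases nbhd_union_subset' hz with h | h
        · exact nbhd_Tset_disj_W hsep hw hS h
        · exact nbhd_Aset_disj_W hsep hw haW.1 h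
    have hsubmod := ncard_nbhd_submod (G := G) (A := Tset G sep w S) (B := Aset G sep w a)
    rw [hAB] at hsubmod
    have hT := ih hS
    have hA : (nbhd G (Aset G sep w a)).ncard = (sep w).ncard :=
      nbhd_Aset_tight hsep hw haW.1 (fun h => haW.2 (h ▸ rfl))
    have hlow := nbhd_Tset_lower hsep hw hsub
    omega

lemma nbhd_Uset_tight {w : V} (hw : w ∈ W) :
    (nbhd G (Uset G sep W w)).ncard = (sep w).ncard :=
  nbhd_Tset_tight hsep hw (W \ {w}) (Set.toFinite _) le_rfl

end USets

section Counting

variable {G : SimpleGraph V} {sep : V → Set V} {W : Set V}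

lemma ncard_eq_card_filter_univ (s : Set V) :
    s.ncard = (Finset.univ.filter (· ∈ s)).card := by
  rw [← Set.ncard_coe_finset]
  congr 1
  ext x
  simp

variable (hsep : ∀ w ∈ W, IsMinimumSep G {w} (W \ {w}) (sep w))

include hsep

/-- If `z` is in some reach set `R_{w'}`, it can only border `U_w` for `w = w'`. -/
lemma mem_nbhd_Uset_unique {w w' : V} (hw : w ∈ W) (hw' : w' ∈ W)
    (hzR : ∀ z ∈ nbhd G (Uset G sep W w), z ∈ Rset G sep w' → w = w') : True := trivial

lemma nbhd_Uset_of_reach {z w w' : V} (hw : w ∈ W) (hw' : w' ∈ W)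
    (hz : z ∈ nbhd G (Uset G sep W w)) (hzR : z ∈ Rset G sep w') : w = w' := by
  by_contra hne
  obtain ⟨hz', u, hu, hadj⟩ := hz
  have huQ : u ∈ Qset G sep w' := by
    have := hu.2; rw [Set.mem_iInter₂] at this
    exact this w' ⟨hw', fun h => hne (h.symm ▸ rfl)⟩
  have : u ∈ Rset G sep w' := reachSet_closed (w_not_mem_sep hw' (hsep w' hw').1) hzR
    hadj.symm (fun h => (mem_Qset_iff.1 huQ).2 h)
  exact (mem_Qset_iff.1 huQ).1 this

lemma nbhd_Uset_no_reach {z w : V} (hw : w ∈ W)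
    (hz : z ∈ nbhd G (Uset G sep W w)) (hzR : z ∉ Rset G sep w) : z ∈ sep w := by
  obtain ⟨hz', u, hu, hadj⟩ := hz
  exact nbr_of_reachSet_mem_sep hw (hsep w hw).1 hu.1 hzR hadj

lemma nbhd_Uset_self_reach {z w' : V} (hw' : w' ∈ W)
    (hz : z ∈ nbhd G (Uset G sep W w')) (hzR : z ∈ Rset G sep w') :
    ∃ j ∈ W, j ≠ w' ∧ z ∈ sep j := by
  have hznotU : z ∉ Uset G sep W w' := hz.1
  have : ¬ (z ∈ ⋂ j ∈ (W \ {w'}), Qset G sep j) := fun h => hznotU ⟨hzR, h⟩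
  rw [Set.mem_iInter₂] at this
  push_neg at this
  obtain ⟨j, hj, hzQ⟩ := this
  rw [mem_Qset_iff, not_and_or, not_not, not_not] at hzQ
  rcases hzQ with hzRj | hzXj
  · exact absurd (Set.mem_singleton_iff.2 (nbhd_Uset_of_reach hsep hw' hj.1 hz hzRj).symm) hj.2
  · exact ⟨j, hj.1, fun h => hj.2 (h ▸ rfl), hzXj⟩

open Finset in
/-- Pointwise the number of `U`-boundaries containing `z` equals the number of separators
containing `z`. -/
lemma card_nbhd_Uset_eq (z : V) :
    (Finset.univ.filter (fun w => w ∈ W ∧ z ∈ nbhd G (Uset G sep W w))).card =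
    (Finset.univ.filter (fun w => w ∈ W ∧ z ∈ sep w)).card := by
  classical
  set FA := fun z => (Finset.univ.filter (fun w => w ∈ W ∧ z ∈ nbhd G (Uset G sep W w)))
  set FB := fun z => (Finset.univ.filter (fun w => w ∈ W ∧ z ∈ sep w))
  have hle : ∀ y, (FA y).card ≤ (FB y).card := by
    intro y
    by_cases hR : ∃ w' ∈ W, y ∈ Rset G sep w'
    · obtain ⟨w', hw', hyR⟩ := hR
      have hsub : FA y ⊆ {w'} := by
        intro w hw
        simp only [FA, mem_filter] at hw
        simp [nbhd_Uset_of_reach hsep hw.2.1 hw' hw.2.2 hyR]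
      rcases Finset.eq_empty_or_nonempty (FA y) with he | hne
      · simp [he]
      · have hcard : (FA y).card ≤ 1 := le_trans (Finset.card_le_card hsub) (by simp)
        have hw'mem : w' ∈ FA y := by
          obtain ⟨w, hwmem⟩ := hne
          have := hsub hwmem
          simp only [Finset.mem_singleton] at this
          rwa [this] at hwmem
        simp only [FA, mem_filter] at hw'mem
        obtain ⟨j, hj, hjne, hjX⟩ := nbhd_Uset_self_reach hsep hw'mem.2.1 hw'mem.2.2 hyR
        have : j ∈ FB y := by simp [FB, hj, hjX]
        have : 1 ≤ (FB y).card := Finset.card_pos.2 ⟨j, this⟩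
        omega
    · push_neg at hR
      refine Finset.card_le_card ?_
      intro w hw
      simp only [FA, mem_filter] at hw
      simp only [FB, mem_filter]
      exact ⟨Finset.mem_univ w, hw.2.1, nbhd_Uset_no_reach hsep hw.2.1 hw.2.2 (hR w hw.2.1)⟩
  have hsum : ∑ y, (FA y).card = ∑ y, (FB y).card := by
    have fub : ∀ (P : V → V → Prop),
        (∑ y, (Finset.univ.filter (fun w => w ∈ W ∧ P w y)).card) =
        ∑ w ∈ Finset.univ.filter (· ∈ W), (Finset.univ.filter (fun y => P w y)).card := by
      intro P
      simp only [Finset.card_filter]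
      rw [Finset.sum_comm, Finset.sum_filter]
      refine Finset.sum_congr rfl ?_
      intro w _
      by_cases h1 : w ∈ W
      · simp [h1]
      · simp [h1]
    rw [fub (fun w y => y ∈ nbhd G (Uset G sep W w)), fub (fun w y => y ∈ sep w)]
    refine Finset.sum_congr rfl ?_
    intro w hw
    simp only [Finset.mem_filter] at hw
    rw [← ncard_eq_card_filter_univ, ← ncard_eq_card_filter_univ]
    exact nbhd_Uset_tight hsep hw.2
  by_contra hne
  have hlt : (FA z).card < (FB z).card := lt_of_le_of_ne (hle z) hne
  have : ∑ y, (FA y).card < ∑ y, (FB y).card :=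
    Finset.sum_lt_sum (fun i _ => hle i) ⟨z, Finset.mem_univ z, hlt⟩
  omega

/-- Key exclusion (XRR): no separator vertex lies in two other reach sets. -/
lemma sep_inter_two_reach (ha : a ∈ W) (hb : b ∈ W) (hc : c ∈ W)
    (hab : a ≠ b) (hz : z ∈ sep c) (hza : z ∈ Rset G sep a) (hzb : z ∈ Rset G sep b) :
    False := by
  have h := card_nbhd_Uset_eq hsep z
  have hA : (Finset.univ.filter (fun w => w ∈ W ∧ z ∈ nbhd G (Uset G sep W w))) = ∅ := by
    rw [Finset.eq_empty_iff_forall_notMem]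
    intro w hw
    simp only [Finset.mem_filter] at hw
    have h1 := nbhd_Uset_of_reach hsep hw.2.1 ha hw.2.2 hza
    have h2 := nbhd_Uset_of_reach hsep hw.2.1 hb hw.2.2 hzb
    exact hab (h1 ▸ h2)
  have hB : c ∈ (Finset.univ.filter (fun w => w ∈ W ∧ z ∈ sep w)) := by simp [hc, hz]
  rw [hA, Finset.card_empty] at h
  have := Finset.card_pos.2 ⟨c, hB⟩
  omega

/-- Key exclusion (XXR): no vertex of two separators lies in any reach set. -/
lemma two_sep_inter_reach (ha : a ∈ W) (hb : b ∈ W) (hc : c ∈ W)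
    (hab : a ≠ b) (hza : z ∈ sep a) (hzb : z ∈ sep b) (hzc : z ∈ Rset G sep c) :
    False := by
  have h := card_nbhd_Uset_eq hsep z
  have hA : (Finset.univ.filter (fun w => w ∈ W ∧ z ∈ nbhd G (Uset G sep W w))) ⊆ {c} := by
    intro w hw
    simp only [Finset.mem_filter] at hw
    simp [nbhd_Uset_of_reach hsep hw.2.1 hc hw.2.2 hzc]
  have hB : ({a, b} : Finset V) ⊆ (Finset.univ.filter (fun w => w ∈ W ∧ z ∈ sep w)) := by
    intro w hw
    rcases Finset.mem_insert.1 hw with rfl | hw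
    · simp [ha, hza]
    · rw [Finset.mem_singleton] at hw
      subst hw; simp [hb, hzb]
  have h1 : (Finset.univ.filter (fun w => w ∈ W ∧ z ∈ nbhd G (Uset G sep W w))).card ≤ 1 :=
    le_trans (Finset.card_le_card hA) (by simp)
  have h2 : 2 ≤ (Finset.univ.filter (fun w => w ∈ W ∧ z ∈ sep w)).card := by
    refine le_trans ?_ (Finset.card_le_card hB)
    rw [Finset.card_insert_of_notMem (by simpa using hab), Finset.card_singleton]
  omega

end Counting

section Triple

variable {G : SimpleGraph V} {sep : V → Set V} {W : Set V}
variable (hsep : ∀ w ∈ W, IsMinimumSep G {w} (W \ {w}) (sep w))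

include hsep

/-- Key exclusion (RRR): no vertex lies in three distinct reach sets. -/
lemma no_triple_reach {a b c z : V} (ha : a ∈ W) (hb : b ∈ W) (hc : c ∈ W)
    (hab : a ≠ b) (hac : a ≠ c) (hbc : b ≠ c)
    (hza : z ∈ Rset G sep a) (hzb : z ∈ Rset G sep b) (hzc : z ∈ Rset G sep c) : False := by
  have key : ∀ v, (removeVerts G (sep a)).Reachable a v →
      (v ∈ Rset G sep a ∧ (v ∈ Rset G sep b → v ∈ Rset G sep c → False)) := by
    refine reach_induction ⟨self_mem_reachSet, fun hb' _ => ?_⟩ ?_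
    · exact hab (reachSet_inter_W hb (hsep b hb).1 hb' ha)
    · intro u v hadj hu hv ih
      refine ⟨reachSet_closed (w_not_mem_sep ha (hsep a ha).1) ih.1 hadj hv, ?_⟩
      intro hvb hvc
      by_cases hub : u ∈ sep b
      · by_cases huc : u ∈ sep c
        · exact two_sep_inter_reach hsep hb hc ha hbc hub huc ih.1
        · have hucR : u ∈ Rset G sep c :=
            reachSet_closed (w_not_mem_sep hc (hsep c hc).1) hvc hadj.symm huc
          exact sep_inter_two_reach hsep ha hc hb hac hub ih.1 hucR
      · have hubR : u ∈ Rset G sep b :=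
          reachSet_closed (w_not_mem_sep hb (hsep b hb).1) hvb hadj.symm hub
        by_cases huc : u ∈ sep c
        · exact sep_inter_two_reach hsep ha hb hc hab huc ih.1 hubR
        · have hucR : u ∈ Rset G sep c :=
            reachSet_closed (w_not_mem_sep hc (hsep c hc).1) hvc hadj.symm huc
          exact ih.2 hubR hucR
  exact (key z (mem_reachSet.1 hza)).2 hzb hzc

end Triple


section RegionLemmas

variable {W : Set V} {FC : V → Set V}

lemma mem_regionP_singleton {w v : V} :
    v ∈ regionP W FC {w} ↔ v ∈ FC w ∧ ∀ w' ∈ W, w' ≠ w → v ∉ FC w' := by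
  simp only [regionP, Set.mem_diff, Set.mem_iInter, Set.mem_singleton_iff, Set.mem_iUnion,
    Set.mem_diff, not_exists]
  constructor
  · rintro ⟨h1, h2⟩
    exact ⟨h1 w rfl, fun w' hw' hne hvF => h2 w' ⟨hw', hne⟩ hvF⟩
  · rintro ⟨h1, h2⟩
    exact ⟨fun x hx => hx ▸ h1, fun w' hw' hvF => h2 w' hw'.1 hw'.2 hvF⟩

lemma innerBnd_subset_self {G : SimpleGraph V} {S : Set V} : innerBnd G S ⊆ S :=
  fun _ hz => not_not.1 hz.1

lemma regionP_empty_cover (hempty : regionP W FC ∅ = ∅) (x : V) : ∃ w ∈ W, x ∈ FC w := by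
  have hx : x ∉ regionP W FC ∅ := by rw [hempty]; exact Set.notMem_empty x
  simp only [regionP, Set.mem_diff, Set.mem_iInter, Set.mem_empty_iff_false, Set.diff_empty,
    Set.mem_iUnion, not_and, not_not, not_forall, not_exists] at hx
  have := hx (fun w h => h.elim)
  obtain ⟨w, hw, hxw⟩ := this
  exact ⟨w, hw, hxw⟩

end RegionLemmas

/-- If `P_W(G,∅) = ∅`, then the sets `B(P_W(G,{w})) ∖ W` for distinct
`w ∈ W` are pairwise disjoint, and contracting each of them into the corresponding `w`
produces a bipedal instance: every connected component `C` of `G_f − W` satisfies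
`|N_{G_f}(C)| ≤ 2`. Here `FC w` is the set of vertices connected to `w` after removing the
farthest minimum `{w}`–`(W ∖ {w})` separator. -/
theorem contracting_boundaries_gives_bipedal
    (G : SimpleGraph V) (Pairs : Set (V × V)) (W : Set V) (k : ℕ)
    (hW : IsMulticut G Pairs W)
    (hInd : ∀ w₁ ∈ W, ∀ w₂ ∈ W, w₁ ≠ w₂ → ¬ G.Adj w₁ w₂)
    (sep : V → Set V)
    (hsep : ∀ w ∈ W, IsMinimumSep G {w} (W \ {w}) (sep w) ∧
      IsFarthest G {w} (W \ {w}) (sep w))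
    (FC : V → Set V) (hFC : ∀ w ∈ W, FC w = reachSet G (sep w) {w})
    (hempty : regionP W FC ∅ = ∅) :
    (∀ w₁ ∈ W, ∀ w₂ ∈ W, w₁ ≠ w₂ →
      (innerBnd G (regionP W FC {w₁}) \ W) ∩ (innerBnd G (regionP W FC {w₂}) \ W) = ∅) ∧
    (∀ f : V → V,
      (∀ w ∈ W, ∀ v ∈ innerBnd G (regionP W FC {w}) \ W, f v = w) →
      ∀ v, v ∉ W →
        (nbhd (contractGraph G ((⋃ w ∈ W, innerBnd G (regionP W FC {w})) \ W) f)
          {u | (removeVerts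
              (contractGraph G ((⋃ w ∈ W, innerBnd G (regionP W FC {w})) \ W) f)
              W).Reachable v u}).ncard ≤ 2) := by
  have hmin : ∀ w ∈ W, IsMinimumSep G {w} (W \ {w}) (sep w) := fun w hw => (hsep w hw).1
  have hcov : ∀ x : V, ∃ w ∈ W, x ∈ Rset G sep w := by
    intro x
    obtain ⟨w, hw, hxw⟩ := regionP_empty_cover hempty x
    refine ⟨w, hw, ?_⟩
    rw [Rset, ← hFC w hw]
    exact hxw
  -- membership transfer between `FC` and `Rset`
  have hFC' : ∀ w ∈ W, ∀ v : V, v ∈ FC w ↔ v ∈ Rset G sep w := by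
    intro w hw v; rw [hFC w hw]; rfl
  constructor
  · -- Part 1: disjointness of the boundaries
    intro w₁ h1 w₂ h2 hne
    rw [Set.eq_empty_iff_forall_notMem]
    rintro v ⟨⟨hv1, -⟩, ⟨hv2, -⟩⟩
    have hv1' := innerBnd_subset_self hv1
    have hv2' := innerBnd_subset_self hv2
    rw [mem_regionP_singleton] at hv1' hv2'
    exact hv1'.2 w₂ h2 (Ne.symm hne) hv2'.1
  · -- Part 2: bipedality
    intro f hf v₀ hv₀W
    set Z : Set V := (⋃ w ∈ W, innerBnd G (regionP W FC {w})) \ W with hZdef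
    set Gf : SimpleGraph V := contractGraph G Z f with hGfdef
    set C : Set V := {u | (removeVerts Gf W).Reachable v₀ u} with hCdef
    have hZW : ∀ z ∈ Z, z ∉ W := fun z hz => hz.2
    have hfZ : ∀ z ∈ Z, ∃ w ∈ W, z ∈ innerBnd G (regionP W FC {w}) ∧ f z = w := by
      rintro z ⟨hz1, hz2⟩
      obtain ⟨w, hw, hzw⟩ := Set.mem_iUnion₂.1 hz1
      exact ⟨w, hw, hzw, hf w hw z ⟨hzw, hz2⟩⟩
    have hfStar_notZ : ∀ x : V, fStar Z f x ∉ Z := by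
      intro x
      by_cases hx : x ∈ Z
      · obtain ⟨w, hw, -, hfx⟩ := hfZ x hx
        simp only [fStar, if_pos hx, hfx]
        exact fun h => hZW w h hw
      · simp only [fStar, if_neg hx]; exact hx
    have hGf_notZ : ∀ a b : V, Gf.Adj a b → a ∉ Z ∧ b ∉ Z := by
      rintro a b ⟨-, u, v', -, ha, hb⟩
      exact ⟨ha ▸ hfStar_notZ u, hb ▸ hfStar_notZ v'⟩
    have hGf_G : ∀ a b : V, Gf.Adj a b → a ∉ W → b ∉ W → G.Adj a b := by
      rintro a b ⟨-, u, v', hadj, ha, hb⟩ haW hbW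
      have hu : u ∉ Z := by
        intro h
        obtain ⟨w, hw, -, hfu⟩ := hfZ u h
        rw [ha] at haW
        simp only [fStar, if_pos h, hfu] at haW
        exact haW hw
      have hv : v' ∉ Z := by
        intro h
        obtain ⟨w, hw, -, hfv⟩ := hfZ v' h
        rw [hb] at hbW
        simp only [fStar, if_pos h, hfv] at hbW
        exact hbW hw
      rw [ha, hb]
      simpa only [fStar, if_neg hu, if_neg hv] using hadj
    have hG_Gf : ∀ a b : V, G.Adj a b → a ∉ Z → b ∉ Z → Gf.Adj a b := by
      intro a b hadj haZ hbZ
      exact ⟨hadj.ne, a, b, hadj, by simp [fStar, haZ], by simp [fStar, hbZ]⟩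
    by_cases hv₀Z : v₀ ∈ Z
    · -- v₀ is a contracted vertex: it is isolated
      have hConly : ∀ u ∈ C, u = v₀ := by
        intro u hu
        refine reach_induction (G := Gf) (X := W) (P := (· = v₀)) rfl ?_ u hu
        rintro p q hadj hp hq rfl
        exact absurd hv₀Z (hGf_notZ p q hadj).1
      have : nbhd Gf C = ∅ := by
        rw [Set.eq_empty_iff_forall_notMem]
        rintro z ⟨hz, u, hu, hadj⟩
        rw [hConly u hu] at hadj
        exact (hGf_notZ v₀ z hadj).1 hv₀Z
      rw [this]
      simp
    · -- main case: v₀ survives contraction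
      have hv₀WZ : v₀ ∉ W ∪ Z := fun h => h.elim hv₀W hv₀Z
      have hCnoWZ : ∀ u ∈ C, u ∉ W ∧ u ∉ Z := by
        intro u hu
        refine reach_induction (G := Gf) (X := W) (P := fun x => x ∉ W ∧ x ∉ Z)
          ⟨hv₀W, hv₀Z⟩ ?_ u hu
        intro p q hadj hp hq _
        exact ⟨hq, (hGf_notZ p q hadj).2⟩
      have hC_G : ∀ u ∈ C, (removeVerts G (W ∪ Z)).Reachable v₀ u := by
        intro u hu
        refine reach_induction (G := Gf) (X := W)
          (P := fun x => (removeVerts G (W ∪ Z)).Reachable v₀ x)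
          (SimpleGraph.Reachable.refl v₀) ?_ u hu
        intro p q hadj hp hq ih
        have hpZ := (hGf_notZ p q hadj).1
        have hqZ := (hGf_notZ p q hadj).2
        exact ih.trans (SimpleGraph.Adj.reachable
          ⟨hGf_G p q hadj hp hq, fun h => h.elim hp hpZ, fun h => h.elim hq hqZ⟩)
      have hG_C : ∀ u : V, (removeVerts G (W ∪ Z)).Reachable v₀ u → u ∈ C := by
        intro u hu
        refine reach_induction (G := G) (X := W ∪ Z) (P := (· ∈ C))
          (SimpleGraph.Reachable.refl v₀) ?_ u hu
        intro p q hadj hp hq ih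
        have : (removeVerts Gf W).Adj p q := by
          refine ⟨hG_Gf p q hadj (fun h => hp (Or.inr h)) (fun h => hq (Or.inr h)),
            fun h => hp (Or.inl h), fun h => hq (Or.inl h)⟩
        exact SimpleGraph.Reachable.trans ih this.reachable
      have legsW : ∀ z ∈ nbhd Gf C, z ∈ W := by
        rintro z ⟨hzC, u, hu, hadj⟩
        by_contra hzW
        obtain ⟨huW, huZ⟩ := hCnoWZ u hu
        have hzZ := (hGf_notZ u z hadj).2
        have hadj' : G.Adj u z := hGf_G u z hadj huW hzW
        refine hzC (hG_C z ((hC_G u hu).trans (SimpleGraph.Adj.reachable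
          ⟨hadj', fun h => h.elim huW huZ, fun h => h.elim hzW hzZ⟩)))
      have legs_attach : ∀ w ∈ nbhd Gf C, w ∈ W →
          ∃ u ∈ C, u ∈ Rset G sep w ∨ u ∈ sep w := by
        rintro w ⟨hwC, u, hu, hadj⟩ hwW
        obtain ⟨huW, huZ⟩ := hCnoWZ u hu
        obtain ⟨-, p, q, hpq, hp, hq⟩ := hadj
        have hpu : p = u := by
          by_cases hpZ : p ∈ Z
          · obtain ⟨w', hw', -, hfp⟩ := hfZ p hpZ
            rw [hp] at huW
            simp only [fStar, if_pos hpZ, hfp] at huW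
            exact absurd hw' huW
          · rw [hp]; simp [fStar, hpZ]
        have hqR : ∃ q' : V, G.Adj u q' ∧ q' ∈ Rset G sep w := by
          by_cases hqZ : q ∈ Z
          · obtain ⟨w', hw', hqbnd, hfq⟩ := hfZ q hqZ
            have hq' : w = w' := by
              rw [hq]; simp only [fStar, if_pos hqZ, hfq]
            refine ⟨q, hpu ▸ hpq, ?_⟩
            have := innerBnd_subset_self hqbnd
            rw [mem_regionP_singleton] at this
            rw [← hFC' w hwW q]
            rw [hq'] at *
            exact this.1
          · have : q = w := by rw [hq]; simp [fStar, hqZ]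
            exact ⟨w, by rw [← this, ← hpu]; exact hpq, self_mem_reachSet⟩
        obtain ⟨q', hadjq, hq'R⟩ := hqR
        refine ⟨u, hu, ?_⟩
        by_cases husep : u ∈ sep w
        · exact Or.inr husep
        · exact Or.inl (reachSet_closed (w_not_mem_sep hwW (hmin w hwW).1) hq'R
            hadjq.symm husep)
      by_cases hcase : ∃ ws ∈ W, ∃ cs, cs ∈ C ∧ cs ∈ regionP W FC {ws}
      · -- Case A : C is inside a private region
        obtain ⟨ws, hws, cs, hcs, hcsP⟩ := hcase
        have hCP : ∀ u ∈ C, u ∈ regionP W FC {ws} := by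
          intro u hu
          have hreach : (removeVerts G (W ∪ Z)).Reachable cs u :=
            (hC_G cs hcs).symm.trans (hC_G u hu)
          refine reach_induction (G := G) (X := W ∪ Z)
            (P := (· ∈ regionP W FC {ws})) hcsP ?_ u hreach
          intro p q hadj hp hq ih
          by_contra hqP
          have hpB : p ∈ innerBnd G (regionP W FC {ws}) :=
            ⟨not_not.2 ih, q, hqP, hadj.symm⟩
          exact hp (Or.inr ⟨Set.mem_iUnion₂.2 ⟨ws, hws, hpB⟩, fun h => hp (Or.inl h)⟩)
        have hsub : nbhd Gf C ⊆ {ws} := by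
          intro z hz
          have hzW := legsW z hz
          obtain ⟨u, hu, hattach⟩ := legs_attach z hz hzW
          have huP := hCP u hu
          rw [Set.mem_singleton_iff]
          by_contra hne
          rw [mem_regionP_singleton] at huP
          rcases hattach with hR | hX
          · exact huP.2 z hzW hne ((hFC' z hzW u).2 hR)
          · obtain ⟨r, hrR, hradj⟩ := sep_min_nbr hzW (hmin z hzW) hX
            have hrP : r ∉ regionP W FC {ws} := by
              rw [mem_regionP_singleton]
              rintro ⟨-, h2⟩
              exact h2 z hzW hne ((hFC' z hzW r).2 hrR)
            have huB : u ∈ innerBnd G (regionP W FC {ws}) :=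
              ⟨not_not.2 (hCP u hu), r, hrP, hradj⟩
            exact (hCnoWZ u hu).2 ⟨Set.mem_iUnion₂.2 ⟨ws, hws, huB⟩, (hCnoWZ u hu).1⟩
        calc (nbhd Gf C).ncard ≤ ({ws} : Set V).ncard :=
              Set.ncard_le_ncard hsub (Set.toFinite _)
          _ ≤ 2 := by rw [Set.ncard_singleton]; omega
      · -- Case B : every vertex of C is in at least two reach sets
        push_neg at hcase
        have hdouble : ∀ u ∈ C, ∃ w₁ ∈ W, ∃ w₂ ∈ W, w₁ ≠ w₂ ∧
            u ∈ Rset G sep w₁ ∧ u ∈ Rset G sep w₂ := by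
          intro u hu
          obtain ⟨w₁, hw₁, huw₁⟩ := hcov u
          have : u ∉ regionP W FC {w₁} := hcase w₁ hw₁ u hu
          rw [mem_regionP_singleton] at this
          push_neg at this
          obtain ⟨w₂, hw₂, hne, huw₂⟩ := this ((hFC' w₁ hw₁ u).2 huw₁)
          exact ⟨w₂, hw₂, w₁, hw₁, hne, (hFC' w₂ hw₂ u).1 huw₂, huw₁⟩
        have hXfree : ∀ u ∈ C, ∀ w ∈ W, u ∉ sep w := by
          intro u hu w hw husep
          obtain ⟨w₁, hw₁, w₂, hw₂, hne, hR1, hR2⟩ := hdouble u hu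
          exact sep_inter_two_reach hmin hw₁ hw₂ hw hne husep hR1 hR2
        have hTconst : ∀ u ∈ C, ∀ w ∈ W, (u ∈ Rset G sep w ↔ v₀ ∈ Rset G sep w) := by
          intro u hu
          have key : ∀ x : V, (removeVerts G (W ∪ Z)).Reachable v₀ x →
              (x ∈ C ∧ ∀ w ∈ W, (x ∈ Rset G sep w ↔ v₀ ∈ Rset G sep w)) := by
            refine reach_induction ⟨SimpleGraph.Reachable.refl v₀, fun w hw => Iff.rfl⟩ ?_
            intro p q hadj hp hq ih
            have hqC : q ∈ C := hG_C q ((hC_G p ih.1).trans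
              (SimpleGraph.Adj.reachable ⟨hadj, hp, hq⟩))
            refine ⟨hqC, fun w hw => ?_⟩
            constructor
            · intro hqR
              refine (ih.2 w hw).1 ?_
              by_cases hpsep : p ∈ sep w
              · exact absurd hpsep (hXfree p ih.1 w hw)
              · exact reachSet_closed (w_not_mem_sep hw (hmin w hw).1) hqR hadj.symm hpsep
            · intro hv₀R
              have hpR := (ih.2 w hw).2 hv₀R
              by_cases hqsep : q ∈ sep w
              · exact absurd hqsep (hXfree q hqC w hw)
              · exact reachSet_closed (w_not_mem_sep hw (hmin w hw).1) hpR hadj hqsep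
          exact (key u (hC_G u hu)).2
        have hsub : nbhd Gf C ⊆ {w | w ∈ W ∧ v₀ ∈ Rset G sep w} := by
          intro z hz
          have hzW := legsW z hz
          obtain ⟨u, hu, hattach⟩ := legs_attach z hz hzW
          rcases hattach with hR | hX
          · exact ⟨hzW, (hTconst u hu z hzW).1 hR⟩
          · exact absurd hX (hXfree u hu z hzW)
        have hT2 : ({w | w ∈ W ∧ v₀ ∈ Rset G sep w} : Set V).ncard ≤ 2 := by
          by_contra hgt
          push_neg at hgt
          obtain ⟨a, ha, b, hb, c, hc, hab, hac, hbc⟩ :=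
            (Set.two_lt_ncard (Set.toFinite _)).1 hgt
          exact no_triple_reach hmin ha.1 hb.1 hc.1 hab hac hbc ha.2 hb.2 hc.2
        calc (nbhd Gf C).ncard ≤ _ := Set.ncard_le_ncard hsub (Set.toFinite _)
          _ ≤ 2 := hT2
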